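/- arXiv:2406.02948 — 4 statements merged into one kernel-verified Lean document; each statement's English description precedes it below -/
import Mathlib

section
/- Let p be a natural number, λ₁, λ₂ > 0 be real numbers, and for λ > 0 define f_λ : ℝ → ℝ by f_λ(x) = e^x / (1 + λ e^x)^(1 + 1/λ). Let H₁, H₂ : ℝ → ℝ be functions with H₁(t) → −∞ and H₂(t) → −∞ as t → −∞, let β₁, β₂ ∈ ℝ^p, and let C be a real constant with 0 < C < ∞. If lim_{t→−∞} H₁(t)/H₂(t) = 1/C and, for every x ∈ ℝ^p, lim_{t→−∞} f_{λ₁}(H₁(t) − x·β₁) / f_{λ₂}(H₂(t) − x·β₂) = C, then C = 1. -/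
/-!
As `y → -∞`, every density `f_λ(y)` is asymptotic to `e^y`, so the ratio in the hypothesis
(at `x = 0`) is asymptotic to `exp (H₁ t - H₂ t)`. Hence `H₁ t - H₂ t → log C`, and since
`H₂ t → -∞` this bounded difference is negligible against `H₂ t`, giving `H₁ t / H₂ t → 1`.
Uniqueness of limits then forces `1 / C = 1`.
-/

open Real Filter Topology

/-- The density `f_λ(x) = e^x / (1 + λ e^x)^(1 + 1/λ)`. -/
noncomputable def densF (lam x : ℝ) : ℝ :=
  Real.exp x / (1 + lam * Real.exp x) ^ (1 + 1 / lam)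

open Asymptotics

theorem isEquivalent_of_tendsto_sub {α β : Type*} [NormedAddCommGroup β] {l : Filter α}
    {u v : α → β} {c : β} (hv : Tendsto (fun x => ‖v x‖) l atTop)
    (h : Tendsto (u - v) l (𝓝 c)) : u ~[l] v :=
  (h.isBigO_one ℝ).trans_isLittleO ((isLittleO_one_left_iff ℝ).mpr hv)

theorem isEquivalent_densF_exp (lam : ℝ) : densF lam ~[atBot] exp := by
  refine isEquivalent_of_tendsto_one ?_
  have hcont : ContinuousAt (fun u : ℝ => ((1 + lam * u) ^ (1 + 1 / lam))⁻¹) 0 :=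
    ((continuousAt_const.add (continuousAt_const.mul continuousAt_id)).rpow_const
      (Or.inl (by simp))).inv₀ (by simp)
  have hlim := hcont.tendsto.comp tendsto_exp_atBot
  simp only [mul_zero, add_zero, one_rpow, inv_one] at hlim
  refine hlim.congr fun y => ?_
  simp [densF, div_div_cancel_left' (exp_pos y).ne']

theorem prop1_neg_infty_general (p : ℕ) (lam₁ lam₂ : ℝ)
    (H₁ H₂ : ℝ → ℝ) (hH₁ : Tendsto H₁ atBot atBot) (hH₂ : Tendsto H₂ atBot atBot)
    (β₁ β₂ : Fin p → ℝ) (C : ℝ) (hC : 0 < C)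
    (hratio : Tendsto (fun t => H₁ t / H₂ t) atBot (nhds (1 / C)))
    (hf : ∀ x : Fin p → ℝ,
      Tendsto
        (fun t =>
          densF lam₁ (H₁ t - ∑ i, x i * β₁ i) / densF lam₂ (H₂ t - ∑ i, x i * β₂ i))
        atBot (nhds C)) :
    C = 1 := by
  have hexp : Tendsto (fun t => exp (H₁ t - H₂ t)) atBot (𝓝 C) := by
    have hequiv := ((isEquivalent_densF_exp lam₁).comp_tendsto hH₁).div
      ((isEquivalent_densF_exp lam₂).comp_tendsto hH₂)
    simpa [Pi.div_def, Function.comp_def, exp_sub] using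
      hequiv.tendsto_nhds (by simpa [Pi.div_def] using hf 0)
  have hsub : Tendsto (H₁ - H₂) atBot (𝓝 (log C)) := by
    simpa [Pi.sub_def, Function.comp_def] using (continuousAt_log hC.ne').tendsto.comp hexp
  have hH₁_equiv : H₁ ~[atBot] H₂ :=
    isEquivalent_of_tendsto_sub (tendsto_abs_atBot_atTop.comp hH₂) hsub
  have hone := (isEquivalent_iff_tendsto_one (hH₂.eventually_ne_atBot 0)).mp hH₁_equiv
  simpa using tendsto_nhds_unique hratio hone

/-- Proposition 1, case `a = -∞`. -/
theorem prop1_neg_infty (p : ℕ) (lam₁ lam₂ : ℝ) (hlam₁ : 0 < lam₁) (hlam₂ : 0 < lam₂)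
    (H₁ H₂ : ℝ → ℝ) (hH₁ : Tendsto H₁ atBot atBot) (hH₂ : Tendsto H₂ atBot atBot)
    (β₁ β₂ : Fin p → ℝ) (C : ℝ) (hC : 0 < C)
    (hratio : Tendsto (fun t => H₁ t / H₂ t) atBot (nhds (1 / C)))
    (hf : ∀ x : Fin p → ℝ,
      Tendsto
        (fun t =>
          densF lam₁ (H₁ t - ∑ i, x i * β₁ i) / densF lam₂ (H₂ t - ∑ i, x i * β₂ i))
        atBot (nhds C)) :
    C = 1 :=
  prop1_neg_infty_general p lam₁ lam₂ H₁ H₂ hH₁ hH₂ β₁ β₂ C hC hratio hf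
end

section
/- For every λ > 0, λ^(1 + 1/λ) · e^(x/λ) · f_λ(x) tends to 1 as x → +∞, where f_λ(x) = e^x / (1 + λ e^x)^(1 + 1/λ); that is, f_λ(x) is asymptotically equivalent to λ^(−(1 + 1/λ)) e^(−x/λ) as x → +∞. -/
open Real Filter Topology

/-!
With `t = λ e^x` and `p = 1 + 1/λ` one has `λ^p e^{x/λ} = t^p e^{-x}`, so the normalized
density is exactly `(t / (1 + t))^p`; as `x → +∞`, `t → +∞`, the base tends to `1`, and so does
its `p`-th power.
-/

theorem tendsto_div_one_add_self_nhds_one {α : Type*} {l : Filter α} {g : α → ℝ}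
    (hg : Tendsto g l atTop) : Tendsto (fun a => g a / (1 + g a)) l (𝓝 1) := by
  have h : Tendsto (fun a => 1 - (1 + g a)⁻¹) l (𝓝 (1 - 0)) :=
    tendsto_const_nhds.sub (tendsto_atTop_add_const_left _ 1 hg).inv_tendsto_atTop
  rw [sub_zero] at h
  refine h.congr' ?_
  filter_upwards [hg.eventually_gt_atTop 0] with a ha
  field_simp
  ring

theorem exp_rpow_one_add_one_div (x lam : ℝ) (hlam : lam ≠ 0) :
    exp x ^ (1 + 1 / lam) = exp (x / lam) * exp x := by
  rw [← exp_mul, ← exp_add]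
  congr 1
  field_simp
  ring

theorem rpow_mul_exp_mul_densF (lam x : ℝ) (hlam : 0 < lam) :
    lam ^ (1 + 1 / lam) * exp (x / lam) * densF lam x
      = (lam * exp x / (1 + lam * exp x)) ^ (1 + 1 / lam) := by
  have hpos : 0 < 1 + lam * exp x := by positivity
  rw [densF, div_rpow (by positivity) hpos.le, mul_rpow hlam.le (exp_pos x).le,
    exp_rpow_one_add_one_div x lam hlam.ne']
  field_simp

/-- tail equivalence of `f_λ` at `+∞`:
`λ^(1 + 1/λ) · e^(x/λ) · f_λ(x) → 1` as `x → +∞`. -/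
theorem densF_tail_at_top (lam : ℝ) (hlam : 0 < lam) :
    Tendsto (fun x => lam ^ (1 + 1 / lam) * Real.exp (x / lam) * densF lam x)
      atTop (nhds 1) := by
  have hbase : Tendsto (fun x => lam * exp x / (1 + lam * exp x)) atTop (𝓝 1) :=
    tendsto_div_one_add_self_nhds_one (tendsto_exp_atTop.const_mul_atTop hlam)
  simpa only [rpow_mul_exp_mul_densF lam _ hlam, one_rpow] using
    hbase.rpow_const (p := 1 + 1 / lam) (Or.inl one_ne_zero)
end

section
/- Let f : ℝ → (0, ∞) be differentiable, let g = f'/f be the derivative of log f, and suppose g(z) → g∞ as z → −∞ for some real g∞ with 0 < g∞ < ∞. Let A, B : ℝ → ℝ be functions with A(z) → −∞ and B(z) → −∞ as z → −∞, such that f(A(z)) / f(B(z)) → 1 as z → −∞. Then A(z) − B(z) → 0 as z → −∞. -/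
open Real Filter Topology

/-! Once `f'/f ≥ c > 0` on a half-line `(-∞, M]`, the mean value theorem for `log f` there gives
`c * |x - y| ≤ |log (f x / f y)|`, and the right-hand side at `x = A z`, `y = B z` tends to `0`. -/

/-- `logDeriv f x = deriv f x / f x` vanishes wherever `f` is not differentiable or is zero. -/
lemma hasDerivAt_log_of_logDeriv_ne_zero {f : ℝ → ℝ} {x : ℝ} (h : logDeriv f x ≠ 0) :
    HasDerivAt (fun t => log (f t)) (logDeriv f x) x := by
  obtain ⟨hderiv, hf⟩ := div_ne_zero_iff.mp h
  exact (differentiableAt_of_deriv_ne_zero hderiv).hasDerivAt.log hf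

lemma mul_sub_le_log_sub_log_of_le_logDeriv {f : ℝ → ℝ} {c M : ℝ} (hc : 0 < c)
    (h : ∀ x ≤ M, c ≤ logDeriv f x) {x y : ℝ} (hxy : x ≤ y) (hy : y ≤ M) :
    c * (y - x) ≤ log (f y) - log (f x) := by
  have hderiv : ∀ t ∈ Set.Iic M, HasDerivAt (fun t => log (f t)) (logDeriv f t) t :=
    fun t ht => hasDerivAt_log_of_logDeriv_ne_zero (hc.trans_le (h t ht)).ne'
  have hdiff : DifferentiableOn ℝ (fun t => log (f t)) (Set.Iic M) :=
    fun t ht => (hderiv t ht).differentiableAt.differentiableWithinAt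
  refine (convex_Iic M).mul_sub_le_image_sub_of_le_deriv hdiff.continuousOn
    (hdiff.mono interior_subset) ?_ x (hxy.trans hy) y hy hxy
  intro t ht
  have htM : t ≤ M := Set.mem_Iic.mp (interior_subset ht)
  rw [(hderiv t htM).deriv]
  exact h t htM

lemma mul_abs_sub_le_abs_log_div_of_le_logDeriv {f : ℝ → ℝ} {c M : ℝ} (hc : 0 < c)
    (h : ∀ x ≤ M, c ≤ logDeriv f x) {x y : ℝ} (hx : x ≤ M) (hy : y ≤ M) :
    c * |x - y| ≤ |log (f x / f y)| := by
  have hf : ∀ t ≤ M, f t ≠ 0 := fun t ht =>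
    (div_ne_zero_iff.mp (hc.trans_le (h t ht)).ne').2
  rw [log_div (hf x hx) (hf y hy)]
  rcases le_total x y with hxy | hyx
  · have hmvt := mul_sub_le_log_sub_log_of_le_logDeriv hc h hxy hy
    rw [abs_sub_comm x, abs_sub_comm (log (f x)), abs_of_nonneg (sub_nonneg.mpr hxy)]
    exact hmvt.trans (le_abs_self _)
  · have hmvt := mul_sub_le_log_sub_log_of_le_logDeriv hc h hyx hx
    rw [abs_of_nonneg (sub_nonneg.mpr hyx)]
    exact hmvt.trans (le_abs_self _)

theorem diff_tendsto_zero_of_ratio_tendsto_one_general (f : ℝ → ℝ)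
    (ginf : ℝ) (hginf : 0 < ginf)
    (hg : Tendsto (fun z => deriv f z / f z) atBot (nhds ginf))
    (A B : ℝ → ℝ) (hA : Tendsto A atBot atBot) (hB : Tendsto B atBot atBot)
    (hratio : Tendsto (fun z => f (A z) / f (B z)) atBot (nhds 1)) :
    Tendsto (fun z => A z - B z) atBot (nhds 0) := by
  obtain ⟨c, hc, hcg⟩ : ∃ c, 0 < c ∧ c < ginf := ⟨ginf / 2, half_pos hginf, half_lt_self hginf⟩
  obtain ⟨M, hM⟩ : ∃ M, ∀ x ≤ M, c ≤ logDeriv f x :=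
    eventually_atBot.mp (hg.eventually (eventually_ge_nhds hcg))
  have hlog : Tendsto (fun z => log (f (A z) / f (B z))) atBot (𝓝 0) := by
    simpa [Function.comp_def] using (continuousAt_log one_ne_zero).tendsto.comp hratio
  refine squeeze_zero_norm' ?_ (by simpa using hlog.abs.const_mul c⁻¹)
  filter_upwards [hA.eventually_le_atBot M, hB.eventually_le_atBot M] with z hAz hBz
  rw [norm_eq_abs, le_inv_mul_iff₀ hc]
  exact mul_abs_sub_le_abs_log_div_of_le_logDeriv hc hM hAz hBz

/-- mean-value-theorem core of Lemma D.1. -/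
theorem diff_tendsto_zero_of_ratio_tendsto_one (f : ℝ → ℝ)
    (hfpos : ∀ z, 0 < f z) (hfdiff : Differentiable ℝ f)
    (ginf : ℝ) (hginf : 0 < ginf)
    (hg : Tendsto (fun z => deriv f z / f z) atBot (nhds ginf))
    (A B : ℝ → ℝ) (hA : Tendsto A atBot atBot) (hB : Tendsto B atBot atBot)
    (hratio : Tendsto (fun z => f (A z) / f (B z)) atBot (nhds 1)) :
    Tendsto (fun z => A z - B z) atBot (nhds 0) :=
  diff_tendsto_zero_of_ratio_tendsto_one_general f ginf hginf hg A B hA hB hratio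
end

section
/- Let p be a natural number and let f₁, f₂ : ℝ → (0, ∞) be differentiable functions such that g₁ = f₁'/f₁ satisfies g₁(z) → g∞ as z → −∞ for some real g∞ with 0 < g∞ < ∞, and such that f₁(t)/f₂(t) → 1 as t → −∞. Let H₁, H₂ : ℝ → ℝ be functions with H₁(z) → −∞ and H₂(z) → −∞ as z → −∞, and let β₁, β₂ ∈ ℝ^p. If for every x ∈ ℝ^p, f₁(H₁(z) − x·β₁) / f₂(H₂(z) − x·β₂) → 1 as z → −∞, then β₁ = β₂ and H₁(z) − H₂(z) → 0 as z → −∞. -/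
/-!
Pass to logarithms, `ℓ = log f₁`. Since `ℓ' → g∞ ≠ 0` at `-∞`, the mean value theorem gives
`ℓ u - ℓ v = g∞ (u - v) + o(u - v)` as `u, v → -∞`, so `ℓ` turns bounded shifts at `-∞` into
shifts multiplied by `g∞`, and conversely. Taking `x = 0`, the hypotheses give `ℓ (H₁ z) - ℓ (H₂ z) → 0`,
hence `H₁ - H₂ → 0`. For general `x`, they give `ℓ (H₁ z - x·β₁) - ℓ (H₂ z - x·β₂) → 0`, while the
arguments differ by `x·β₂ - x·β₁ + o(1)`; so `g∞ (x·β₂ - x·β₁) = 0` for every `x`, i.e. `β₁ = β₂`.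
-/

open Real Filter Topology Asymptotics

theorem Filter.Tendsto.log_sub_log_of_div {α : Type*} {l : Filter α} {u v : α → ℝ}
    (h : Tendsto (fun a => u a / v a) l (𝓝 1)) :
    Tendsto (fun a => Real.log (u a) - Real.log (v a)) l (𝓝 0) := by
  have hlog : Tendsto (fun a => Real.log (u a / v a)) l (𝓝 0) := by
    simpa using h.log one_ne_zero
  refine hlog.congr' ?_
  filter_upwards [h.eventually (eventually_ne_nhds one_ne_zero)] with a ha
  exact log_div (div_ne_zero_iff.1 ha).1 (div_ne_zero_iff.1 ha).2

section AsymptoticSlope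

variable {L g : ℝ → ℝ} {c : ℝ} {α : Type*} {l : Filter α} {u v : α → ℝ}

theorem isLittleO_sub_sub_mul_sub_of_tendsto_deriv
    (hL : ∀ᶠ t in atBot, HasDerivAt L (g t) t) (hg : Tendsto g atBot (𝓝 c))
    (hu : Tendsto u l atBot) (hv : Tendsto v l atBot) :
    (fun z => L (u z) - L (v z) - c * (u z - v z)) =o[l] fun z => u z - v z := by
  refine IsLittleO.of_bound fun ε hε => ?_
  obtain ⟨M, hM⟩ := eventually_atBot.1
    (hL.and (hg.eventually (Metric.closedBall_mem_nhds c hε)))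
  filter_upwards [hu.eventually (eventually_le_atBot M), hv.eventually (eventually_le_atBot M)]
    with z huz hvz
  have hmvt := Convex.norm_image_sub_le_of_norm_hasDerivWithin_le
    (f := fun t => L t - c * t) (f' := fun t => g t - c) (s := Set.Iic M)
    (fun t ht => (((hM t ht).1.sub ((hasDerivAt_id t).const_mul c)).congr_deriv
      (by simp)).hasDerivWithinAt)
    (fun t ht => by simpa [← dist_eq_norm] using (hM t ht).2)
    (convex_Iic M) hvz huz
  calc ‖L (u z) - L (v z) - c * (u z - v z)‖
      = ‖L (u z) - c * u z - (L (v z) - c * v z)‖ := by ring_nf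
    _ ≤ ε * ‖u z - v z‖ := hmvt

theorem tendsto_comp_sub_comp_of_tendsto_sub
    (hL : ∀ᶠ t in atBot, HasDerivAt L (g t) t) (hg : Tendsto g atBot (𝓝 c))
    (hu : Tendsto u l atBot) (hv : Tendsto v l atBot) {d : ℝ}
    (hd : Tendsto (fun z => u z - v z) l (𝓝 d)) :
    Tendsto (fun z => L (u z) - L (v z)) l (𝓝 (c * d)) := by
  have herr : Tendsto (fun z => L (u z) - L (v z) - c * (u z - v z)) l (𝓝 0) :=
    (isLittleO_one_iff ℝ).1
      ((isLittleO_sub_sub_mul_sub_of_tendsto_deriv hL hg hu hv).trans_isBigO (hd.isBigO_one ℝ))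
  simpa using herr.add (hd.const_mul c)

theorem tendsto_sub_of_tendsto_comp_sub_comp
    (hL : ∀ᶠ t in atBot, HasDerivAt L (g t) t) (hg : Tendsto g atBot (𝓝 c)) (hc : c ≠ 0)
    (hu : Tendsto u l atBot) (hv : Tendsto v l atBot)
    (h : Tendsto (fun z => L (u z) - L (v z)) l (𝓝 0)) :
    Tendsto (fun z => u z - v z) l (𝓝 0) := by
  have hlin : (fun z => c * (u z - v z)) =O[l] fun z => L (u z) - L (v z) := by
    simpa using ((isLittleO_sub_sub_mul_sub_of_tendsto_deriv hL hg hu hv).const_mul_right'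
      (Ne.isUnit hc)).right_isBigO_add
  simpa [hc] using (hlin.trans_tendsto h).const_mul c⁻¹

end AsymptoticSlope

theorem lemmaD1_general (p : ℕ) (f₁ f₂ : ℝ → ℝ)
    (hf₁diff : Differentiable ℝ f₁)
    (ginf : ℝ) (hginf : 0 < ginf)
    (hg₁ : Tendsto (fun z => deriv f₁ z / f₁ z) atBot (nhds ginf))
    (hf₁f₂ : Tendsto (fun t => f₁ t / f₂ t) atBot (nhds 1))
    (H₁ H₂ : ℝ → ℝ) (hH₁ : Tendsto H₁ atBot atBot) (hH₂ : Tendsto H₂ atBot atBot)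
    (β₁ β₂ : Fin p → ℝ)
    (hratio : ∀ x : Fin p → ℝ,
      Tendsto (fun z => f₁ (H₁ z - ∑ i, x i * β₁ i) / f₂ (H₂ z - ∑ i, x i * β₂ i))
        atBot (nhds 1)) :
    β₁ = β₂ ∧ Tendsto (fun z => H₁ z - H₂ z) atBot (nhds 0) := by
  have hderiv : ∀ᶠ t in atBot, HasDerivAt (fun t => log (f₁ t)) (deriv f₁ t / f₁ t) t := by
    -- `f₁` cannot vanish near `-∞`: there `deriv f₁ t / f₁ t` would be `0`, far from `ginf`.
    filter_upwards [hg₁.eventually (eventually_ne_nhds hginf.ne')] with t ht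
    exact (hf₁diff t).hasDerivAt.log (div_ne_zero_iff.1 ht).2
  have hlog_f₁ : ∀ {u v : ℝ → ℝ}, Tendsto v atBot atBot →
      Tendsto (fun z => f₁ (u z) / f₂ (v z)) atBot (𝓝 1) →
      Tendsto (fun z => log (f₁ (u z)) - log (f₁ (v z))) atBot (𝓝 0) := fun {u v} hv h => by
    simpa using h.log_sub_log_of_div.sub (hf₁f₂.log_sub_log_of_div.comp hv)
  have hH : Tendsto (fun z => H₁ z - H₂ z) atBot (𝓝 0) :=
    tendsto_sub_of_tendsto_comp_sub_comp hderiv hg₁ hginf.ne' hH₁ hH₂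
      (hlog_f₁ hH₂ (by simpa using hratio 0))
  have hdot : ∀ x : Fin p → ℝ, ∑ i, x i * β₁ i = ∑ i, x i * β₂ i := fun x => by
    set a := ∑ i, x i * β₁ i
    set b := ∑ i, x i * β₂ i
    have hv : Tendsto (fun z => H₂ z - b) atBot atBot := tendsto_atBot_add_const_right _ _ hH₂
    have hslope := tendsto_comp_sub_comp_of_tendsto_sub hderiv hg₁
      (tendsto_atBot_add_const_right _ (-a) hH₁) hv ((hH.sub_const (a - b)).congr fun z => by ring)
    have hzero : ginf * (0 - (a - b)) = 0 := tendsto_nhds_unique hslope (hlog_f₁ hv (hratio x))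
    nlinarith
  refine ⟨funext fun i => ?_, hH⟩
  simpa [Pi.single_apply, ite_mul] using hdot (Pi.single i 1)

/-- Lemma D.1 (case `c = 1`). -/
theorem lemmaD1 (p : ℕ) (f₁ f₂ : ℝ → ℝ)
    (hf₁pos : ∀ z, 0 < f₁ z) (hf₂pos : ∀ z, 0 < f₂ z)
    (hf₁diff : Differentiable ℝ f₁) (hf₂diff : Differentiable ℝ f₂)
    (ginf : ℝ) (hginf : 0 < ginf)
    (hg₁ : Tendsto (fun z => deriv f₁ z / f₁ z) atBot (nhds ginf))
    (hf₁f₂ : Tendsto (fun t => f₁ t / f₂ t) atBot (nhds 1))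
    (H₁ H₂ : ℝ → ℝ) (hH₁ : Tendsto H₁ atBot atBot) (hH₂ : Tendsto H₂ atBot atBot)
    (β₁ β₂ : Fin p → ℝ)
    (hratio : ∀ x : Fin p → ℝ,
      Tendsto (fun z => f₁ (H₁ z - ∑ i, x i * β₁ i) / f₂ (H₂ z - ∑ i, x i * β₂ i))
        atBot (nhds 1)) :
    β₁ = β₂ ∧ Tendsto (fun z => H₁ z - H₂ z) atBot (nhds 0) :=
  lemmaD1_general p f₁ f₂ hf₁diff ginf hginf hg₁ hf₁f₂ H₁ H₂ hH₁ hH₂ β₁ β₂ hratio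
end
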